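/- Let C : [0,1]² → ℝ be continuous on [0,1]² and twice continuously differentiable on the open square (0,1)², and suppose there exists κ > 0 such that for all u = (u_1,u_2) ∈ (0,1)² and all j, k ∈ {1,2}, |∂²C/∂u_j∂u_k (u)| ≤ κ {u_j(1−u_j) u_k(1−u_k)}^{−1/2}. Then for every γ ∈ (0,1/2), every u ∈ [γ, 1−γ]² and every v ∈ [0,1]², | C(v) − C(u) − Σ_{j=1}^{2} (v_j − u_j) ∂C/∂u_j (u) | ≤ (4κ/γ) Σ_{j=1}^{2} (v_j − u_j)². -/

import Mathlib

/-!
Restrict `C` to the segment `w t = u + t (v - u)`, `t ∈ [0, 1]`. Since `u` is at distance at least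
`γ` from the boundary, `w t` is at distance at least `(1 - t) γ` from it, so each factor
`w_j (1 - w_j)` is at least `(1 - t) γ / 2` and the second derivative of the restriction is
`O(1 / (1 - t))`. This singularity is integrable against the Cauchy remainder
`φ(τ) - φ(0) - τ φ'(0) = ∫₀^τ (τ - t) φ''(t) dt`, because `τ - t ≤ 1 - t`; letting `τ → 1` uses
only the continuity of `C` on the closed square.
-/

open Set

noncomputable section

/-- Standard basis of `ℝ²`. -/
def bas2 : Fin 2 → ℝ × ℝ := ![((1 : ℝ), (0 : ℝ)), ((0 : ℝ), (1 : ℝ))]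

/-- Coordinates of a point of `ℝ²`. -/
def coord2 (p : ℝ × ℝ) : Fin 2 → ℝ := ![p.1, p.2]

open Filter Topology AffineMap

lemma div_two_le_mul_one_sub {m z : ℝ} (hm0 : 0 ≤ m) (hm : m ≤ 1 / 2) (hz : z ∈ Icc m (1 - m)) :
    m / 2 ≤ z * (1 - z) := by
  nlinarith [mul_nonneg (sub_nonneg.2 hz.1) (sub_nonneg.2 hz.2), mul_nonneg hm0 (sub_nonneg.2 hm)]

lemma lineMap_mem_Icc_mul {γ x y t : ℝ} (hx : x ∈ Icc γ (1 - γ)) (hy : y ∈ Icc 0 1)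
    (ht : t ∈ Icc 0 1) : lineMap x y t ∈ Icc ((1 - t) * γ) (1 - (1 - t) * γ) := by
  obtain ⟨hx0, hx1⟩ := hx
  obtain ⟨hy0, hy1⟩ := hy
  obtain ⟨ht0, ht1⟩ := ht
  rw [lineMap_apply_ring]
  constructor <;> nlinarith [mul_nonneg ht0 hy0, mul_nonneg ht0 (sub_nonneg.2 hy1)]

lemma lineMap_mem_Icc_prod {γ t : ℝ} {u v : ℝ × ℝ}
    (hu : u ∈ Icc γ (1 - γ) ×ˢ Icc γ (1 - γ)) (hv : v ∈ Icc 0 1 ×ˢ Icc 0 1) (ht : t ∈ Icc 0 1) :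
    lineMap u v t ∈ Icc ((1 - t) * γ) (1 - (1 - t) * γ) ×ˢ Icc ((1 - t) * γ) (1 - (1 - t) * γ) :=
  ⟨lineMap_mem_Icc_mul hu.1 hv.1 ht, lineMap_mem_Icc_mul hu.2 hv.2 ht⟩

lemma abs_sub_sub_mul_le_of_abs_deriv2_le {φ φ' φ'' : ℝ → ℝ} {M τ : ℝ}
    (hφ : ∀ t ∈ Ico (0 : ℝ) 1, HasDerivAt φ (φ' t) t)
    (hφ' : ∀ t ∈ Ico (0 : ℝ) 1, HasDerivAt φ' (φ'' t) t)
    (hφ'' : ∀ t ∈ Ico (0 : ℝ) 1, |φ'' t| ≤ M / (1 - t)) (hτ : τ ∈ Ico (0 : ℝ) 1) :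
    |φ τ - φ 0 - τ * φ' 0| ≤ M := by
  obtain ⟨hτ0, hτ1⟩ := hτ
  have hM : 0 ≤ M := by simpa using (abs_nonneg _).trans (hφ'' 0 ⟨le_rfl, zero_lt_one⟩)
  have hsub : Icc 0 τ ⊆ Ico (0 : ℝ) 1 := fun t ht => ⟨ht.1, ht.2.trans_lt hτ1⟩
  -- Cauchy remainder: `g τ = 0` and `|g'| ≤ M`, since `τ - t ≤ 1 - t` absorbs the pole of `φ''`.
  set g : ℝ → ℝ := fun t => φ τ - φ t - (τ - t) * φ' t
  have hg : ∀ t ∈ Icc 0 τ, HasDerivAt g (-((τ - t) * φ'' t)) t := fun t ht =>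
    (((hasDerivAt_const t (φ τ)).sub (hφ t (hsub ht))).sub
      (((hasDerivAt_id t).const_sub τ).mul (hφ' t (hsub ht)))).congr_deriv (by simp)
  have hg' : ∀ t ∈ Ico 0 τ, ‖-((τ - t) * φ'' t)‖ ≤ M := by
    intro t ht
    have h1t : 0 < 1 - t := by linarith [ht.2]
    calc ‖-((τ - t) * φ'' t)‖ = (τ - t) * |φ'' t| := by
          rw [norm_neg, Real.norm_eq_abs, abs_mul, abs_of_nonneg (by linarith [ht.2])]
      _ ≤ (1 - t) * (M / (1 - t)) :=
          mul_le_mul (by linarith) (hφ'' t (hsub (Ico_subset_Icc_self ht))) (abs_nonneg _)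
            h1t.le
      _ = M := mul_div_cancel₀ M h1t.ne'
  have := norm_image_sub_le_of_norm_deriv_le_segment'
    (fun t ht => (hg t ht).hasDerivWithinAt) hg' τ ⟨hτ0, le_rfl⟩
  simp only [g, sub_self, zero_mul, sub_zero, Real.norm_eq_abs, zero_sub, abs_neg] at this
  nlinarith

lemma abs_sub_sub_le_of_abs_deriv2_le {φ φ' φ'' : ℝ → ℝ} {M : ℝ}
    (hcont : ContinuousWithinAt φ (Ico 0 1) 1)
    (hφ : ∀ t ∈ Ico (0 : ℝ) 1, HasDerivAt φ (φ' t) t)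
    (hφ' : ∀ t ∈ Ico (0 : ℝ) 1, HasDerivAt φ' (φ'' t) t)
    (hφ'' : ∀ t ∈ Ico (0 : ℝ) 1, |φ'' t| ≤ M / (1 - t)) :
    |φ 1 - φ 0 - φ' 0| ≤ M := by
  have := right_nhdsWithin_Ico_neBot (zero_lt_one' ℝ)
  have hlim : Tendsto (fun τ => |φ τ - φ 0 - τ * φ' 0|) (𝓝[Ico 0 1] 1)
      (𝓝 |φ 1 - φ 0 - 1 * φ' 0|) :=
    ((hcont.tendsto.sub tendsto_const_nhds).sub
      ((tendsto_id.mono_left nhdsWithin_le_nhds).mul tendsto_const_nhds)).abs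
  simpa using le_of_tendsto hlim (eventually_nhdsWithin_of_forall fun τ hτ =>
    abs_sub_sub_mul_le_of_abs_deriv2_le hφ hφ' hφ'' hτ)

lemma hasDerivAt_comp_lineMap {E F : Type*} [NormedAddCommGroup E] [NormedSpace ℝ E]
    [NormedAddCommGroup F] [NormedSpace ℝ F] {g : E → F} {a b : E} {t : ℝ}
    (hg : DifferentiableAt ℝ g (lineMap a b t)) :
    HasDerivAt (fun s => g (lineMap a b s)) (fderiv ℝ g (lineMap a b t) (b - a)) t :=
  hg.hasFDerivAt.comp_hasDerivAt t hasDerivAt_lineMap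

lemma fderiv_fderiv_apply_eq {E F : Type*} [NormedAddCommGroup E] [NormedSpace ℝ E]
    [NormedAddCommGroup F] [NormedSpace ℝ F] {f : E → F} {p : E}
    (hf : DifferentiableAt ℝ (fderiv ℝ f) p) (e e' : E) :
    fderiv ℝ (fun q => fderiv ℝ f q e) p e' = fderiv ℝ (fderiv ℝ f) p e' e := by
  simp [fderiv_clm_apply hf (differentiableAt_const e)]

lemma abs_sub_sub_fderiv_le_of_abs_fderiv_fderiv_le {E : Type*} [NormedAddCommGroup E]
    [NormedSpace ℝ E] {f : E → ℝ} {u v : E} {M : ℝ}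
    (hcont : ContinuousWithinAt (fun t : ℝ => f (lineMap u v t)) (Ico 0 1) 1)
    (hf : ∀ t ∈ Ico (0 : ℝ) 1, ContDiffAt ℝ 2 f (lineMap u v t))
    (hbound : ∀ t ∈ Ico (0 : ℝ) 1,
      |fderiv ℝ (fderiv ℝ f) (lineMap u v t) (v - u) (v - u)| ≤ M / (1 - t)) :
    |f v - f u - fderiv ℝ f u (v - u)| ≤ M := by
  have hDf : ∀ t ∈ Ico (0 : ℝ) 1, DifferentiableAt ℝ (fderiv ℝ f) (lineMap u v t) := fun t ht =>
    ((hf t ht).fderiv_right (m := 1) le_rfl).differentiableAt one_ne_zero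
  simpa using abs_sub_sub_le_of_abs_deriv2_le hcont
    (fun t ht => hasDerivAt_comp_lineMap ((hf t ht).differentiableAt two_ne_zero))
    (fun t ht => (hasDerivAt_comp_lineMap ((hDf t ht).clm_apply (differentiableAt_const _)))
      |>.congr_deriv (fderiv_fderiv_apply_eq (hDf t ht) _ _)) hbound

lemma apply_eq_fst_smul_add_snd_smul {F : Type*} [NormedAddCommGroup F] [NormedSpace ℝ F]
    (L : ℝ × ℝ →L[ℝ] F) (d : ℝ × ℝ) : L d = d.1 • L (bas2 0) + d.2 • L (bas2 1) := by
  conv_lhs => rw [show d = d.1 • bas2 0 + d.2 • bas2 1 by ext <;> simp [bas2]]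
  rw [map_add, map_smul, map_smul]

lemma abs_apply_le_of_abs_apply_bas2_le (L : ℝ × ℝ →L[ℝ] ℝ) {K : ℝ} (hL : ∀ j, |L (bas2 j)| ≤ K)
    (d : ℝ × ℝ) : |L d| ≤ (|d.1| + |d.2|) * K := by
  rw [apply_eq_fst_smul_add_snd_smul, smul_eq_mul, smul_eq_mul, add_mul]
  refine (abs_add_le _ _).trans ?_
  rw [abs_mul, abs_mul]
  gcongr <;> exact hL _

lemma abs_apply_apply_le_of_abs_apply_bas2_le (B : ℝ × ℝ →L[ℝ] ℝ × ℝ →L[ℝ] ℝ) {K : ℝ}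
    (hB : ∀ j k, |B (bas2 j) (bas2 k)| ≤ K) (d : ℝ × ℝ) :
    |B d d| ≤ 2 * (d.1 ^ 2 + d.2 ^ 2) * K := by
  have hK : 0 ≤ K := (abs_nonneg _).trans (hB 0 0)
  have h := abs_apply_le_of_abs_apply_bas2_le (B.flip d)
    (fun j => abs_apply_le_of_abs_apply_bas2_le (B (bas2 j)) (hB j) d) d
  rw [ContinuousLinearMap.flip_apply] at h
  refine h.trans ?_
  rw [← mul_assoc, ← sq]
  gcongr
  nlinarith [sq_abs d.1, sq_abs d.2, sq_nonneg (|d.1| - |d.2|)]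

lemma abs_fderiv_fderiv_apply_le {C : ℝ × ℝ → ℝ} {κ m : ℝ} {p : ℝ × ℝ} (hκ : 0 ≤ κ) (hm0 : 0 < m)
    (hm : m ≤ 1 / 2) (hp : p ∈ Icc m (1 - m) ×ˢ Icc m (1 - m))
    (hC : DifferentiableAt ℝ (fderiv ℝ C) p)
    (hbound : ∀ j k : Fin 2, |fderiv ℝ (fun q => fderiv ℝ C q (bas2 j)) p (bas2 k)| ≤
        κ / √(coord2 p j * (1 - coord2 p j) * (coord2 p k * (1 - coord2 p k))))
    (d : ℝ × ℝ) :
    |fderiv ℝ (fderiv ℝ C) p d d| ≤ 4 * κ / m * (d.1 ^ 2 + d.2 ^ 2) := by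
  have hm2 : 0 < m / 2 := half_pos hm0
  have hp' : ∀ i, m / 2 ≤ coord2 p i * (1 - coord2 p i) := Fin.forall_fin_two.2
    ⟨div_two_le_mul_one_sub hm0.le hm hp.1, div_two_le_mul_one_sub hm0.le hm hp.2⟩
  refine (abs_apply_apply_le_of_abs_apply_bas2_le _ (K := κ / (m / 2)) (fun k j => ?_)
    d).trans_eq (by field_simp; ring)
  rw [← fderiv_fderiv_apply_eq hC]
  refine (hbound j k).trans (div_le_div_of_nonneg_left hκ hm2 ?_)
  calc m / 2 = √(m / 2 * (m / 2)) := (Real.sqrt_mul_self hm2.le).symm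
    _ ≤ _ := Real.sqrt_le_sqrt (mul_le_mul (hp' j) (hp' k) hm2.le (hm2.le.trans (hp' j)))

theorem stmt12 (C : ℝ × ℝ → ℝ) (κ : ℝ) (hκ : 0 < κ)
    (hCcont : ContinuousOn C (Set.Icc 0 1 ×ˢ Set.Icc 0 1))
    (hC2 : ContDiffOn ℝ 2 C (Set.Ioo 0 1 ×ˢ Set.Ioo 0 1))
    (hbound : ∀ p ∈ Set.Ioo (0 : ℝ) 1 ×ˢ Set.Ioo (0 : ℝ) 1, ∀ j k : Fin 2,
      |fderiv ℝ (fun q => fderiv ℝ C q (bas2 j)) p (bas2 k)| ≤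
        κ / Real.sqrt (coord2 p j * (1 - coord2 p j) * (coord2 p k * (1 - coord2 p k)))) :
    ∀ γ ∈ Set.Ioo (0 : ℝ) (1 / 2),
      ∀ u ∈ Set.Icc γ (1 - γ) ×ˢ Set.Icc γ (1 - γ),
        ∀ v ∈ Set.Icc (0 : ℝ) 1 ×ˢ Set.Icc (0 : ℝ) 1,
          |C v - C u -
              ((v.1 - u.1) * fderiv ℝ C u ((1 : ℝ), (0 : ℝ)) +
                (v.2 - u.2) * fderiv ℝ C u ((0 : ℝ), (1 : ℝ)))| ≤
            4 * κ / γ * ((v.1 - u.1) ^ 2 + (v.2 - u.2) ^ 2) := by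
  rintro γ ⟨hγ0, hγ⟩ u hu v hv
  have hmem : ∀ t ∈ Ico (0 : ℝ) 1, lineMap u v t ∈ Ioo (0 : ℝ) 1 ×ˢ Ioo (0 : ℝ) 1 := by
    intro t ht
    have hsub := Icc_subset_Ioo (mul_pos (sub_pos.2 ht.2) hγ0)
      (by nlinarith [ht.2] : 1 - (1 - t) * γ < 1)
    exact prod_mono hsub hsub (lineMap_mem_Icc_prod hu hv (Ico_subset_Icc_self ht))
  have hmaps : MapsTo (lineMap u v) (Icc (0 : ℝ) 1) (Icc 0 1 ×ˢ Icc 0 1) := by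
    intro t ht
    have hsub := Icc_subset_Icc (mul_nonneg (sub_nonneg.2 ht.2) hγ0.le)
      (by nlinarith [ht.2] : 1 - (1 - t) * γ ≤ 1)
    exact prod_mono hsub hsub (lineMap_mem_Icc_prod hu hv ht)
  have hcont : ContinuousWithinAt (fun t : ℝ => C (lineMap u v t)) (Ico 0 1) 1 :=
    ((hCcont.comp lineMap_continuous.continuousOn hmaps).continuousWithinAt
      ⟨zero_le_one, le_rfl⟩).mono Ico_subset_Icc_self
  have hC2' : ∀ t ∈ Ico (0 : ℝ) 1, ContDiffAt ℝ 2 C (lineMap u v t) := fun t ht =>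
    hC2.contDiffAt ((isOpen_Ioo.prod isOpen_Ioo).mem_nhds (hmem t ht))
  have hbound' : ∀ t ∈ Ico (0 : ℝ) 1, |fderiv ℝ (fderiv ℝ C) (lineMap u v t) (v - u) (v - u)| ≤
      4 * κ / γ * ((v.1 - u.1) ^ 2 + (v.2 - u.2) ^ 2) / (1 - t) := by
    intro t ht
    have hm : 0 < (1 - t) * γ := mul_pos (sub_pos.2 ht.2) hγ0
    refine (abs_fderiv_fderiv_apply_le hκ.le hm (by nlinarith [ht.1])
      (lineMap_mem_Icc_prod hu hv (Ico_subset_Icc_self ht))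
      (((hC2' t ht).fderiv_right (m := 1) le_rfl).differentiableAt one_ne_zero)
      (hbound _ (hmem t ht)) (v - u)).trans_eq ?_
    simp only [Prod.fst_sub, Prod.snd_sub]
    field_simp
  simpa [apply_eq_fst_smul_add_snd_smul (fderiv ℝ C u) (v - u), bas2] using
    abs_sub_sub_fderiv_le_of_abs_fderiv_fderiv_le hcont hC2' hbound'
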